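/- Let M, N ∈ Mat_{r×s}(ℂ) and ε ≥ 0 satisfy ‖MM† − NN†‖₁ ≤ 2√2·ε, and suppose for every unit vector (u,v) ∈ ℂ² we have ‖(uM+vN)(uM+vN)† − NN†‖₁ ≤ 2√2·ε. Then ‖MN†‖₁ ≤ 6√2·ε and ‖NM†‖₁ ≤ 6√2·ε. -/

import Mathlib

/-! The trace norm is dual to the operator norm, `‖B‖₁ = max {re tr (W B) : W Wᴴ ≤ 1}`, and this
gives the triangle inequality. For `(u, v) = (1, 1)/√2` and `(i, 1)/√2`, twice
`(uM + vN)(uM + vN)ᴴ - NNᴴ` minus `MMᴴ - NNᴴ` equals `MNᴴ + NMᴴ` and `i (MNᴴ - NMᴴ)` respectively,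
so both have trace norm at most `3 · 2√2 ε`; `MNᴴ` and `NMᴴ` are half their sum and difference. -/

open Matrix Complex
open scoped ComplexOrder Classical

noncomputable def matSqrt {n : Type*} [Fintype n] [DecidableEq n]
    (A : Matrix n n ℂ) : Matrix n n ℂ :=
  if h : A.PosSemidef then
    (h.1.eigenvectorUnitary : Matrix n n ℂ) *
      diagonal ((↑) ∘ Real.sqrt ∘ h.1.eigenvalues) *
      (star h.1.eigenvectorUnitary : Matrix n n ℂ)
  else 0

noncomputable def traceNorm {m n : Type*} [Fintype m] [Fintype n] [DecidableEq n]
    (A : Matrix m n ℂ) : ℝ :=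
  ((matSqrt (Aᴴ * A)).trace).re

noncomputable def frobNorm {m n : Type*} [Fintype m] [Fintype n]
    (A : Matrix m n ℂ) : ℝ :=
  Real.sqrt (((Aᴴ * A).trace).re)

noncomputable def fidelity {n : Type*} [Fintype n] [DecidableEq n]
    (P Q : Matrix n n ℂ) : ℝ :=
  ((matSqrt (matSqrt P * Q * matSqrt P)).trace).re

/-- The outer product |ψ⟩⟨ψ| of a vector. -/
noncomputable def outerMat {ι : Type*} (ψ : ι → ℂ) : Matrix ι ι ℂ :=
  fun p q => ψ p * (starRingEnd ℂ) (ψ q)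

/-- Partial trace over the first (A) factor. -/
noncomputable def ptraceA {r s : ℕ} (ρ : Matrix (Fin r × Fin s) (Fin r × Fin s) ℂ) :
    Matrix (Fin s) (Fin s) ℂ :=
  fun k l => ∑ i : Fin r, ρ (i, k) (i, l)

/-- Partial trace over the second (B) factor. -/
noncomputable def ptraceB {r s : ℕ} (ρ : Matrix (Fin r × Fin s) (Fin r × Fin s) ℂ) :
    Matrix (Fin r) (Fin r) ℂ :=
  fun i j => ∑ k : Fin s, ρ (i, k) (j, k)

open scoped MatrixOrder InnerProductSpace

section TraceNorm

variable {m n : Type*} [Fintype m] [Fintype n] [DecidableEq n]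

lemma matSqrt_eq_cfc {A : Matrix n n ℂ} (hA : A.PosSemidef) : matSqrt A = cfc Real.sqrt A := by
  rw [hA.1.cfc_eq, IsHermitian.cfc, Unitary.conjStarAlgAut_apply, matSqrt, dif_pos hA]
  rfl

lemma traceNorm_eq_sum_sqrt_eigenvalues (B : Matrix m n ℂ) :
    traceNorm B = ∑ i, √((isHermitian_conjTranspose_mul_self B).eigenvalues i) := by
  rw [traceNorm, matSqrt, dif_pos (posSemidef_conjTranspose_mul_self B), trace_mul_cycle,
    Unitary.coe_star_mul_self, one_mul, trace_diagonal, re_sum]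
  simp

lemma trace_toEuclideanLin (X : Matrix n n ℂ) :
    LinearMap.trace ℂ _ X.toEuclideanLin = X.trace := by
  rw [LinearMap.trace_eq_matrix_trace ℂ (EuclideanSpace.basisFun n ℂ).toBasis]
  congr 1
  ext i j
  simp [LinearMap.toMatrix_apply]

lemma toEuclideanLin_mul_apply {l o : Type*} [Fintype o] [DecidableEq o] (X : Matrix l n ℂ)
    (Y : Matrix n o ℂ) (x : EuclideanSpace ℂ o) :
    (X * Y).toEuclideanLin x = X.toEuclideanLin (Y.toEuclideanLin x) := by
  rw [toEuclideanLin, toLpLin_mul_same]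
  rfl

lemma norm_toEuclideanLin_sq (C : Matrix m n ℂ) (x : EuclideanSpace ℂ n) :
    ‖C.toEuclideanLin x‖ ^ 2 = (⟪x, (Cᴴ * C).toEuclideanLin x⟫_ℂ).re := by
  rw [toEuclideanLin_mul_apply, toEuclideanLin_conjTranspose_eq_adjoint,
    LinearMap.adjoint_inner_right, ← inner_self_eq_norm_sq (𝕜 := ℂ)]
  rfl

lemma norm_toEuclideanLin_conjTranspose_le {W : Matrix n m ℂ} (hW : W * Wᴴ ≤ 1)
    (x : EuclideanSpace ℂ n) : ‖Wᴴ.toEuclideanLin x‖ ≤ ‖x‖ := by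
  have hpos := (isPositive_toEuclideanLin_iff.mpr (le_iff.mp hW)).re_inner_nonneg_right x
  have hWx := norm_toEuclideanLin_sq Wᴴ x
  rw [conjTranspose_conjTranspose] at hWx
  rw [map_sub, LinearMap.sub_apply, inner_sub_right, map_sub, toEuclideanLin, toLpLin_one,
    ← toEuclideanLin, LinearMap.id_apply, inner_self_eq_norm_sq, RCLike.re_to_complex, ← hWx]
    at hpos
  exact (pow_le_pow_iff_left₀ (norm_nonneg _) (norm_nonneg _) two_ne_zero).mp (sub_nonneg.mp hpos)

lemma re_trace_mul_le_traceNorm {W : Matrix n m ℂ} (hW : W * Wᴴ ≤ 1) (B : Matrix m n ℂ) :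
    (W * B).trace.re ≤ traceNorm B := by
  have hA := isHermitian_conjTranspose_mul_self B
  set e := hA.eigenvectorBasis
  have hBe : ∀ i, ‖B.toEuclideanLin (e i)‖ = √(hA.eigenvalues i) := fun i => by
    rw [← Real.sqrt_sq (norm_nonneg _), norm_toEuclideanLin_sq, hA.eigenvalues_eq,
      EuclideanSpace.inner_eq_star_dotProduct, dotProduct_comm]
    rfl
  rw [traceNorm_eq_sum_sqrt_eigenvalues, ← trace_toEuclideanLin, LinearMap.trace_eq_sum_inner _ e,
    re_sum]
  gcongr with i
  calc (⟪e i, (W * B).toEuclideanLin (e i)⟫_ℂ).re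
      ≤ ‖⟪Wᴴ.toEuclideanLin (e i), B.toEuclideanLin (e i)⟫_ℂ‖ := by
        rw [toEuclideanLin_conjTranspose_eq_adjoint, LinearMap.adjoint_inner_left,
          toEuclideanLin_mul_apply]
        exact re_le_norm _
    _ ≤ ‖Wᴴ.toEuclideanLin (e i)‖ * ‖B.toEuclideanLin (e i)‖ := norm_inner_le_norm _ _
    _ ≤ 1 * √(hA.eigenvalues i) := by
        rw [hBe]
        gcongr
        exact (norm_toEuclideanLin_conjTranspose_le hW _).trans_eq (e.orthonormal.1 i)
    _ = √(hA.eigenvalues i) := one_mul _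

/-- The witness is `W = |B|⁺ Bᴴ`, with `|B|⁺ = cfc (√·)⁻¹ (Bᴴ * B)` the pseudo-inverse of `|B|`.
Since `0⁻¹ = 0`, the identities `(√x)⁻¹ * x = √x` and `√x * (√x)⁻¹ ≤ 1` hold for every real `x`,
so no information on the spectrum is needed. -/
lemma exists_re_trace_mul_eq_traceNorm (B : Matrix m n ℂ) :
    ∃ W : Matrix n m ℂ, W * Wᴴ ≤ 1 ∧ (W * B).trace.re = traceNorm B := by
  set A := Bᴴ * B
  have hA : IsSelfAdjoint A := isHermitian_conjTranspose_mul_self B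
  set X := cfc (fun x : ℝ => (√x)⁻¹) A
  have hXA : X * A = cfc Real.sqrt A := by
    conv_lhs => rhs; rw [← cfc_id' ℝ A]
    rw [← cfc_mul _ _ A (A.finite_real_spectrum.continuousOn _)]
    simp only [inv_mul_eq_div, Real.div_sqrt]
  refine ⟨X * Bᴴ, ?_, ?_⟩
  · have hX : Xᴴ = X := (cfc_predicate _ A : IsSelfAdjoint X)
    calc X * Bᴴ * (X * Bᴴ)ᴴ = X * A * X := by
          rw [conjTranspose_mul, conjTranspose_conjTranspose, hX]
          simp only [A, Matrix.mul_assoc]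
      _ = cfc (fun x : ℝ => √x * (√x)⁻¹) A := by
          rw [hXA, cfc_mul _ _ A (A.finite_real_spectrum.continuousOn _)
            (A.finite_real_spectrum.continuousOn _)]
      _ ≤ 1 := cfc_le_one _ A fun x _ => by
          rcases eq_or_ne (√x) 0 with h | h
          · simp [h]
          · rw [mul_inv_cancel₀ h]
  · rw [Matrix.mul_assoc, hXA, traceNorm, matSqrt_eq_cfc (posSemidef_conjTranspose_mul_self B)]

lemma traceNorm_add_le (A B : Matrix m n ℂ) : traceNorm (A + B) ≤ traceNorm A + traceNorm B := by
  obtain ⟨W, hW, hWAB⟩ := exists_re_trace_mul_eq_traceNorm (A + B)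
  rw [← hWAB, Matrix.mul_add, trace_add, add_re]
  exact add_le_add (re_trace_mul_le_traceNorm hW A) (re_trace_mul_le_traceNorm hW B)

lemma traceNorm_smul (c : ℂ) (A : Matrix m n ℂ) : traceNorm (c • A) = ‖c‖ * traceNorm A := by
  have hA := posSemidef_conjTranspose_mul_self A
  have hcA : (c • A)ᴴ * (c • A) = (‖c‖ ^ 2 : ℝ) • (Aᴴ * A) := by
    rw [conjTranspose_smul, Matrix.smul_mul, Matrix.mul_smul, smul_smul, star_def,
      conj_mul', ← ofReal_pow, Complex.coe_smul]
  have hsqrt : cfc Real.sqrt ((‖c‖ ^ 2 : ℝ) • (Aᴴ * A)) = ‖c‖ • cfc Real.sqrt (Aᴴ * A) := by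
    rw [← cfc_comp_smul _ _ _ Real.continuous_sqrt.continuousOn hA.1.isSelfAdjoint,
      ← cfc_smul ‖c‖ Real.sqrt (Aᴴ * A) Real.continuous_sqrt.continuousOn]
    congr 1
    funext x
    rw [smul_eq_mul, smul_eq_mul, Real.sqrt_mul (by positivity), Real.sqrt_sq (norm_nonneg _)]
  rw [traceNorm, traceNorm, matSqrt_eq_cfc hA, matSqrt_eq_cfc (posSemidef_conjTranspose_mul_self _),
    hcA, hsqrt, trace_smul, Complex.real_smul, re_ofReal_mul]

lemma traceNorm_neg (A : Matrix m n ℂ) : traceNorm (-A) = traceNorm A := by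
  rw [← neg_one_smul ℂ A, traceNorm_smul, norm_neg, norm_one, one_mul]

lemma traceNorm_two_smul_sub_le {X D : Matrix m n ℂ} {a : ℝ} (hX : traceNorm X ≤ a)
    (hD : traceNorm D ≤ a) : traceNorm ((2 : ℂ) • X - D) ≤ 3 * a := by
  calc traceNorm ((2 : ℂ) • X - D) ≤ traceNorm ((2 : ℂ) • X) + traceNorm (-D) := by
        rw [sub_eq_add_neg]; exact traceNorm_add_le _ _
    _ = 2 * traceNorm X + traceNorm D := by rw [traceNorm_smul, traceNorm_neg, Complex.norm_two]
    _ ≤ 3 * a := by linarith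

lemma traceNorm_le_of_add_of_sub {A B : Matrix m n ℂ} {a : ℝ} (hadd : traceNorm (A + B) ≤ a)
    (hsub : traceNorm (A - B) ≤ a) : traceNorm A ≤ a ∧ traceNorm B ≤ a := by
  have half : ∀ P Q : Matrix m n ℂ, traceNorm P ≤ a → traceNorm Q ≤ a →
      traceNorm ((2⁻¹ : ℂ) • (P + Q)) ≤ a := fun P Q hP hQ => by
    rw [traceNorm_smul, norm_inv, Complex.norm_two]
    linarith [traceNorm_add_le P Q]
  have hsub' : traceNorm (B - A) ≤ a := by rwa [← neg_sub, traceNorm_neg]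
  constructor
  · convert half _ _ hadd hsub using 2; module
  · convert half _ _ hadd hsub' using 2; module

end TraceNorm

lemma two_smul_sub_eq_cross_terms {m n : Type*} [Fintype n] (M N : Matrix m n ℂ) {u v : ℂ}
    (hu : ‖u‖ ^ 2 = 2⁻¹) (hv : ‖v‖ ^ 2 = 2⁻¹) :
    (2 : ℂ) • ((u • M + v • N) * (u • M + v • N)ᴴ - N * Nᴴ) - (M * Mᴴ - N * Nᴴ)
      = (2 * (u * star v)) • (M * Nᴴ) + (2 * (v * star u)) • (N * Mᴴ) := by
  have hu' : star u * u = 2⁻¹ := by rw [star_def, conj_mul', ← ofReal_pow, hu]; norm_num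
  have hv' : star v * v = 2⁻¹ := by rw [star_def, conj_mul', ← ofReal_pow, hv]; norm_num
  simp only [conjTranspose_add, conjTranspose_smul, Matrix.add_mul, Matrix.mul_add,
    Matrix.smul_mul, Matrix.mul_smul, smul_add, smul_smul, hu', hv']
  module

theorem stmt5_general {r s : ℕ} (M N : Matrix (Fin r) (Fin s) ℂ) (ε : ℝ)
    (h0 : traceNorm (M * Mᴴ - N * Nᴴ) ≤ 2 * Real.sqrt 2 * ε)
    (h1 : ∀ u v : ℂ, ‖u‖ ^ 2 + ‖v‖ ^ 2 = 1 →
      traceNorm ((u • M + v • N) * (u • M + v • N)ᴴ - N * Nᴴ) ≤ 2 * Real.sqrt 2 * ε) :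
    traceNorm (M * Nᴴ) ≤ 6 * Real.sqrt 2 * ε ∧
      traceNorm (N * Mᴴ) ≤ 6 * Real.sqrt 2 * ε := by
  obtain ⟨w, hw⟩ : ∃ w : ℂ, ‖w‖ ^ 2 = 2⁻¹ :=
    ⟨(√2)⁻¹, by rw [norm_inv, norm_real, Real.norm_of_nonneg (by positivity), inv_pow,
      Real.sq_sqrt zero_le_two]⟩
  have hww : w * star w = 2⁻¹ := by rw [star_def, mul_conj', ← ofReal_pow, hw]; norm_num
  have hbound : ∀ u : ℂ, ‖u‖ ^ 2 = 2⁻¹ → traceNorm ((2 : ℂ) •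
      ((u • M + w • N) * (u • M + w • N)ᴴ - N * Nᴴ) - (M * Mᴴ - N * Nᴴ)) ≤ 6 * √2 * ε :=
    fun u hu => by linarith [traceNorm_two_smul_sub_le (h1 u w (by rw [hu, hw]; norm_num)) h0]
  have hsum : traceNorm (M * Nᴴ + N * Mᴴ) ≤ 6 * √2 * ε := by
    have h := two_smul_sub_eq_cross_terms M N hw hw
    rw [hww, show (2 : ℂ) * 2⁻¹ = 1 by norm_num, one_smul, one_smul] at h
    exact h ▸ hbound w hw
  have hdiff : traceNorm (M * Nᴴ - N * Mᴴ) ≤ 6 * √2 * ε := by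
    have hIw : ‖I * w‖ ^ 2 = 2⁻¹ := by rw [norm_mul, norm_I, one_mul, hw]
    have h := two_smul_sub_eq_cross_terms M N hIw hw
    have hc1 : 2 * (I * w * star w) = I := by rw [mul_assoc, hww]; ring
    have hc2 : 2 * (w * star (I * w)) = -I := by
      rw [star_mul', mul_left_comm w, hww, star_def, conj_I]; ring
    rw [hc1, hc2, neg_smul, ← sub_eq_add_neg, ← smul_sub] at h
    rw [← one_mul (traceNorm _), ← norm_I, ← traceNorm_smul, ← h]
    exact hbound (I * w) hIw
  exact traceNorm_le_of_add_of_sub hsum hdiff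

/-- If `‖MM† - NN†‖₁ ≤ 2√2 ε` and for every unit pair `(u,v) ∈ ℂ²` we have
`‖(uM+vN)(uM+vN)† - NN†‖₁ ≤ 2√2 ε`, then `‖MN†‖₁ ≤ 6√2 ε` and `‖NM†‖₁ ≤ 6√2 ε`. -/
theorem stmt5 {r s : ℕ} (M N : Matrix (Fin r) (Fin s) ℂ) (ε : ℝ) (hε : 0 ≤ ε)
    (h0 : traceNorm (M * Mᴴ - N * Nᴴ) ≤ 2 * Real.sqrt 2 * ε)
    (h1 : ∀ u v : ℂ, ‖u‖ ^ 2 + ‖v‖ ^ 2 = 1 →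
      traceNorm ((u • M + v • N) * (u • M + v • N)ᴴ - N * Nᴴ) ≤ 2 * Real.sqrt 2 * ε) :
    traceNorm (M * Nᴴ) ≤ 6 * Real.sqrt 2 * ε ∧
      traceNorm (N * Mᴴ) ≤ 6 * Real.sqrt 2 * ε :=
  stmt5_general M N ε h0 h1
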